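/- arXiv:1605.05233 — 3 statements merged into one kernel-verified Lean document; each statement's English description precedes it below -/
import Mathlib

section
/- The function u(x,t) = a₀ − (4ρβ₁k₁²)/(3ζ) · tanh²(k₃·x − c₃·t + A₃), where k₃ = √β₁·k₁/3 and c₃ = √β₁·k₁·(9ζa₀ − 8ρβ₁k₁²)/27, satisfies the KdV equation u_t + ζ·u·u_x + ρ·u_{xxx} = 0 for all (x,t) ∈ ℝ². -/
/-!
The wave is u = φ(k x − c t + A) with φ = a − B tanh², a polynomial in tanh. Since
tanh' = 1 − tanh², every derivative of a polynomial in tanh is again one, so the KdV residual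
is a polynomial in T = tanh(k x − c t + A). It factors as
φ'·((ζ k a − 8 ρ k³ − c) + k T² (12 ρ k² − ζ B)), and both brackets vanish for
k = √β₁ k₁ / 3, B = 12 ρ k² / ζ, c = k (ζ a − 8 ρ k²).
-/

open Real Polynomial

theorem Real.hasDerivAt_tanh (x : ℝ) : HasDerivAt tanh (1 - tanh x ^ 2) x := by
  have h := (hasDerivAt_sinh x).div (hasDerivAt_cosh x) (cosh_pos x).ne'
  rw [show sinh / cosh = tanh from funext fun y => (tanh_eq_sinh_div_cosh y).symm] at h
  refine h.congr_deriv ?_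
  rw [tanh_eq_sinh_div_cosh, div_pow]
  field_simp

noncomputable def tanhDerivative (p : ℝ[X]) : ℝ[X] := derivative p * (1 - X ^ 2)

theorem hasDerivAt_eval_tanh_affine (p : ℝ[X]) (m b y : ℝ) :
    HasDerivAt (fun z => p.eval (tanh (m * z + b)))
      (m * (tanhDerivative p).eval (tanh (m * y + b))) y := by
  have hlin : HasDerivAt (fun z => m * z + b) m y := by
    simpa using ((hasDerivAt_id y).const_mul m).add_const b
  refine ((p.hasDerivAt _).comp y ((hasDerivAt_tanh _).comp y hlin)).congr_deriv ?_
  simp only [tanhDerivative, Function.comp_apply, eval_mul, eval_sub, eval_one, eval_pow, eval_X]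
  ring

theorem iteratedDeriv_eval_tanh_affine (p : ℝ[X]) (m b : ℝ) (n : ℕ) :
    iteratedDeriv n (fun z => p.eval (tanh (m * z + b)))
      = fun z => m ^ n * (tanhDerivative^[n] p).eval (tanh (m * z + b)) := by
  induction n with
  | zero => simp
  | succ n ih =>
    funext y
    rw [iteratedDeriv_succ, ih, Function.iterate_succ_apply', pow_succ, mul_assoc]
    exact ((hasDerivAt_eval_tanh_affine _ m b y).const_mul _).deriv

theorem kdv_of_tanh_sq_wave (ζ ρ a k c B A : ℝ) (hB : ζ * B = 12 * ρ * k ^ 2)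
    (hc : c = k * (ζ * a - 8 * ρ * k ^ 2)) (u : ℝ → ℝ → ℝ)
    (hu : ∀ x t, u x t = a - B * tanh (k * x - c * t + A) ^ 2) (x t : ℝ) :
    deriv (fun τ => u x τ) t + ζ * u x t * deriv (fun y => u y t) x
      + ρ * iteratedDeriv 3 (fun y => u y t) x = 0 := by
  set p : ℝ[X] := C a - C B * X ^ 2
  have hp₁ (T : ℝ) : (tanhDerivative p).eval T = -2 * B * T * (1 - T ^ 2) := by
    simp only [p, tanhDerivative, derivative_sub, derivative_C, derivative_mul, derivative_X_pow,
      eval_sub, eval_mul, eval_C, eval_pow, eval_X, eval_one, eval_zero, eval_add]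
    ring
  have hp₃ (T : ℝ) :
      (tanhDerivative^[3] p).eval T = 8 * B * T * (1 - T ^ 2) * (2 - 3 * T ^ 2) := by
    simp only [p, Function.iterate_succ_apply', Function.iterate_zero_apply, tanhDerivative,
      derivative_sub, derivative_C, derivative_mul, derivative_X_pow_succ, derivative_X,
      derivative_one, derivative_neg, map_add, map_one, Nat.cast_one, pow_one, zero_mul, mul_zero,
      mul_one, zero_add, add_zero, zero_sub, eval_mul, eval_add, eval_sub, eval_neg, eval_C,
      eval_one, eval_X, eval_pow, eval_zero]
    ring
  have hx : (fun y => u y t) = fun y => p.eval (tanh (k * y + (A - c * t))) := by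
    funext y; simp only [hu, p, eval_sub, eval_mul, eval_C, eval_pow, eval_X]; ring_nf
  have ht : (fun τ => u x τ) = fun τ => p.eval (tanh (-c * τ + (k * x + A))) := by
    funext τ; simp only [hu, p, eval_sub, eval_mul, eval_C, eval_pow, eval_X]; ring_nf
  rw [← iteratedDeriv_one, ← iteratedDeriv_one, hx, ht, iteratedDeriv_eval_tanh_affine,
    iteratedDeriv_eval_tanh_affine, iteratedDeriv_eval_tanh_affine, hu]
  beta_reduce
  rw [show -c * t + (k * x + A) = k * x - c * t + A by ring,
    show k * x + (A - c * t) = k * x - c * t + A by ring, Function.iterate_one, hp₁, hp₃]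
  set T := tanh (k * x - c * t + A)
  linear_combination (2 * B * T * (1 - T ^ 2)) * hc + (2 * B * T * (1 - T ^ 2) * T ^ 2 * k) * hB

theorem tanh_solitary_wave_solves_kdv (ζ ρ a₀ β₁ k₁ A₃ : ℝ)
    (hζ : ζ ≠ 0) (hβ : 0 < β₁)
    (u : ℝ → ℝ → ℝ)
    (hu : ∀ x t, u x t = a₀ - (4 * ρ * β₁ * k₁ ^ 2) / (3 * ζ)
        * Real.tanh ((Real.sqrt β₁ * k₁ / 3) * x
            - (Real.sqrt β₁ * k₁ * (9 * ζ * a₀ - 8 * ρ * β₁ * k₁ ^ 2) / 27) * t + A₃) ^ 2) :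
    ∀ x t,
      deriv (fun τ => u x τ) t
        + ζ * u x t * deriv (fun y => u y t) x
        + ρ * iteratedDeriv 3 (fun y => u y t) x = 0 := by
  have hsq : Real.sqrt β₁ ^ 2 = β₁ := Real.sq_sqrt hβ.le
  refine kdv_of_tanh_sq_wave ζ ρ a₀ _ _ _ A₃ ?_ ?_ u hu
  · field_simp
    rw [hsq]
    ring
  · linear_combination (8 * ρ * k₁ ^ 3 * Real.sqrt β₁ / 27) * hsq
end

section
/- The singular complexiton solution u(x,t) = 1/6 + (4 − 4·sin(−x+t)·cosh(x+3t))/(cos(−x+t) − sinh(x+3t))² tends to the constant 1/6 as x → +∞ (for any fixed t), and likewise as x → −∞. -/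
/-!
Set `s = |sinh (x + 3t)|`, which tends to `∞` as `x → ±∞`. Since `cosh ≤ 1 + |sinh|`, the numerator
is `O(s)`, while the denominator is at least `(s - 1)²`; so the fraction is `O(1/s)` and `u → 1/6`.
-/

open Filter Real

theorem Real.cosh_le_one_add_abs_sinh (y : ℝ) : cosh y ≤ 1 + |sinh y| := by
  rw [← cosh_abs, abs_sinh]
  have hexp : exp (-|y|) ≤ 1 := exp_le_one_iff.2 (neg_nonpos.2 (abs_nonneg y))
  linarith [cosh_sub_sinh |y|]

theorem Real.tendsto_abs_sinh_cocompact : Tendsto (fun y => |sinh y|) (cocompact ℝ) atTop :=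
  tendsto_atTop_mono
    (fun y => by rw [norm_eq_abs, abs_sinh]; exact self_le_sinh_iff.2 (abs_nonneg y))
    tendsto_norm_cocompact_atTop

theorem abs_complexiton_fraction_le {θ y : ℝ} (hy : 2 ≤ |sinh y|) :
    |(4 - 4 * sin θ * cosh y) / (cos θ - sinh y) ^ 2| ≤ 32 / |sinh y| := by
  set s := |sinh y|
  have hs : 0 < s := by linarith
  have hnum : |4 - 4 * sin θ * cosh y| ≤ 8 * s := by
    have hsc : |sin θ * cosh y| ≤ 1 + s := by
      rw [abs_mul, abs_of_pos (cosh_pos y)]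
      exact (mul_le_of_le_one_left (cosh_pos y).le (abs_sin_le_one θ)).trans
        (cosh_le_one_add_abs_sinh y)
    calc |4 - 4 * sin θ * cosh y| ≤ 4 + 4 * |sin θ * cosh y| := by
          rw [mul_assoc]; refine (abs_sub _ _).trans ?_; rw [abs_mul]; norm_num
      _ ≤ 8 * s := by linarith
  have hden : (s / 2) ^ 2 ≤ (cos θ - sinh y) ^ 2 := by
    have hdiff : s - 1 ≤ |cos θ - sinh y| := by
      have := abs_sub_abs_le_abs_sub (sinh y) (cos θ)
      rw [abs_sub_comm] at this
      linarith [abs_cos_le_one θ]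
    rw [← sq_abs (cos θ - sinh y)]
    exact pow_le_pow_left₀ (by positivity) (by linarith) 2
  rw [abs_div, abs_sq]
  calc |4 - 4 * sin θ * cosh y| / (cos θ - sinh y) ^ 2 ≤ 8 * s / (s / 2) ^ 2 :=
        div_le_div₀ (by positivity) hnum (by positivity) hden
    _ = 32 / s := by field_simp; ring

theorem tendsto_complexiton_fraction {α : Type*} {l : Filter α} (θ y : α → ℝ)
    (hy : Tendsto (fun x => |sinh (y x)|) l atTop) :
    Tendsto (fun x => (4 - 4 * sin (θ x) * cosh (y x)) / (cos (θ x) - sinh (y x)) ^ 2)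
      l (nhds 0) :=
  squeeze_zero_norm' ((hy.eventually_ge_atTop 2).mono fun _ => abs_complexiton_fraction_le)
    (tendsto_const_nhds.div_atTop hy)

theorem singular_complexiton_tends_to_const
    (u : ℝ → ℝ → ℝ)
    (hu : ∀ x t, u x t = 1 / 6
        + (4 - 4 * Real.sin (-x + t) * Real.cosh (x + 3 * t))
          / (Real.cos (-x + t) - Real.sinh (x + 3 * t)) ^ 2) :
    ∀ t : ℝ,
      Tendsto (fun x => u x t) atTop (nhds (1 / 6))
      ∧ Tendsto (fun x => u x t) atBot (nhds (1 / 6)) := by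
  intro t
  have hy : Tendsto (fun x => |sinh (x + 3 * t)|) (cocompact ℝ) atTop :=
    tendsto_abs_sinh_cocompact.comp
      (Homeomorph.addRight (3 * t)).isClosedEmbedding.tendsto_cocompact
  have hu_lim : Tendsto (fun x => u x t) (cocompact ℝ) (nhds (1 / 6)) := by
    simpa only [hu, add_zero] using
      (tendsto_complexiton_fraction (fun x => -x + t) _ hy).const_add (1 / 6 : ℝ)
  exact ⟨hu_lim.mono_left atTop_le_cocompact, hu_lim.mono_left atBot_le_cocompact⟩
end

section
/- The function u(x,t) = (12c₂μ₂ − ζa₂)/(12ζμ₂) + a₂E/(μ₀+μ₂E) − a₂μ₂E²/(μ₀+μ₂E)², where E = exp(± (√(ζa₂)/(2k₂√(3ρμ₂)))·(η+θ₁)) with η = k₂(x − c₂t), satisfies the KdV equation u_t + ζ·u·u_x + ρ·u_{xxx} = 0 wherever μ₀ + μ₂E ≠ 0. -/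
lemma expDeriv (s c y : ℝ) : HasDerivAt (fun z => Real.exp (s*z+c)) (s * Real.exp (s*y+c)) y := by
  have h : HasDerivAt (fun z : ℝ => s*z+c) s y := by
    simpa using ((hasDerivAt_id y).const_mul s).add_const c
  simpa [mul_comm, Function.comp_def] using (Real.hasDerivAt_exp (s*y+c)).comp y h

lemma aux1 (a₂ μ₀ μ₂ C s c y : ℝ) (hD : μ₀ + μ₂ * Real.exp (s*y+c) ≠ 0) :
    HasDerivAt (fun z => C + a₂ * Real.exp (s*z+c) / (μ₀ + μ₂ * Real.exp (s*z+c))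
      - a₂ * μ₂ * (Real.exp (s*z+c))^2 / (μ₀ + μ₂ * Real.exp (s*z+c))^2)
      (a₂ * μ₀ * s * (Real.exp (s*y+c) * (μ₀ - μ₂ * Real.exp (s*y+c)))
        / (μ₀ + μ₂ * Real.exp (s*y+c))^3) y := by
  have he := expDeriv s c y
  have hden : HasDerivAt (fun z => μ₀ + μ₂ * Real.exp (s*z+c)) (μ₂ * (s * Real.exp (s*y+c))) y :=
    (he.const_mul μ₂).const_add μ₀
  have h1 : HasDerivAt (fun z => a₂ * Real.exp (s*z+c) / (μ₀ + μ₂ * Real.exp (s*z+c)))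
      ((a₂ * (s * Real.exp (s*y+c)) * (μ₀ + μ₂ * Real.exp (s*y+c))
        - a₂ * Real.exp (s*y+c) * (μ₂ * (s * Real.exp (s*y+c))))
        / (μ₀ + μ₂ * Real.exp (s*y+c))^2) y :=
    (he.const_mul a₂).div hden hD
  have h2 : HasDerivAt (fun z => a₂ * μ₂ * (Real.exp (s*z+c))^2 / (μ₀ + μ₂ * Real.exp (s*z+c))^2)
      ((a₂ * μ₂ * (2 * (Real.exp (s*y+c))^1 * (s * Real.exp (s*y+c))) * (μ₀ + μ₂ * Real.exp (s*y+c))^2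
        - a₂ * μ₂ * (Real.exp (s*y+c))^2 * (2 * (μ₀ + μ₂ * Real.exp (s*y+c))^1 * (μ₂ * (s * Real.exp (s*y+c)))))
        / ((μ₀ + μ₂ * Real.exp (s*y+c))^2)^2) y :=
    ((he.pow 2).const_mul (a₂*μ₂)).div (hden.pow 2) (pow_ne_zero 2 hD)
  have h3 := (h1.sub h2).const_add C
  convert h3 using 1
  all_goals try rfl
  all_goals try (funext z; simp only [Pi.div_apply, Pi.mul_apply, Pi.pow_apply, Pi.sub_apply]; ring)
  all_goals (have hD' : μ₀ + Real.exp (s*y+c) * μ₂ ≠ 0 := by rwa [mul_comm] at hD)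
  all_goals ((try simp only [Pi.mul_apply, Pi.pow_apply, Nat.cast_ofNat]); field_simp; ring)

lemma aux2 (a₂ μ₀ μ₂ s c y : ℝ) (hD : μ₀ + μ₂ * Real.exp (s*y+c) ≠ 0) :
    HasDerivAt (fun z => a₂ * μ₀ * s * (Real.exp (s*z+c) * (μ₀ - μ₂ * Real.exp (s*z+c)))
        / (μ₀ + μ₂ * Real.exp (s*z+c))^3)
      (a₂ * μ₀ * s^2 * (Real.exp (s*y+c) * (μ₀^2 - 4*μ₀*μ₂*Real.exp (s*y+c) + μ₂^2*(Real.exp (s*y+c))^2))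
        / (μ₀ + μ₂ * Real.exp (s*y+c))^4) y := by
  have he := expDeriv s c y
  have hden : HasDerivAt (fun z => μ₀ + μ₂ * Real.exp (s*z+c)) (μ₂ * (s * Real.exp (s*y+c))) y :=
    (he.const_mul μ₂).const_add μ₀
  have hlin : HasDerivAt (fun z => μ₀ - μ₂ * Real.exp (s*z+c)) (-(μ₂ * (s * Real.exp (s*y+c)))) y :=
    (he.const_mul μ₂).const_sub μ₀
  have hnum := (he.mul hlin).const_mul (a₂*μ₀*s)
  have h := hnum.div (hden.pow 3) (pow_ne_zero 3 hD)
  convert h using 1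
  all_goals try rfl
  all_goals try (funext z; simp only [Pi.div_apply, Pi.mul_apply, Pi.pow_apply, Pi.sub_apply]; ring)
  all_goals (have hD' : μ₀ + Real.exp (s*y+c) * μ₂ ≠ 0 := by rwa [mul_comm] at hD)
  all_goals ((try simp only [Pi.mul_apply, Pi.pow_apply, Nat.cast_ofNat]); field_simp; ring)

lemma aux3 (a₂ μ₀ μ₂ s c y : ℝ) (hD : μ₀ + μ₂ * Real.exp (s*y+c) ≠ 0) :
    HasDerivAt (fun z => a₂ * μ₀ * s^2 * (Real.exp (s*z+c) * (μ₀^2 - 4*μ₀*μ₂*Real.exp (s*z+c) + μ₂^2*(Real.exp (s*z+c))^2))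
        / (μ₀ + μ₂ * Real.exp (s*z+c))^4)
      (a₂ * μ₀ * s^3 * (Real.exp (s*y+c) * (μ₀ - μ₂ * Real.exp (s*y+c))
          * (μ₀^2 - 10*μ₀*μ₂*Real.exp (s*y+c) + μ₂^2*(Real.exp (s*y+c))^2))
        / (μ₀ + μ₂ * Real.exp (s*y+c))^5) y := by
  have he := expDeriv s c y
  have hden : HasDerivAt (fun z => μ₀ + μ₂ * Real.exp (s*z+c)) (μ₂ * (s * Real.exp (s*y+c))) y :=
    (he.const_mul μ₂).const_add μ₀
  have hpoly : HasDerivAt (fun z => μ₀^2 - 4*μ₀*μ₂*Real.exp (s*z+c) + μ₂^2*(Real.exp (s*z+c))^2)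
      (-(4*μ₀*μ₂ * (s * Real.exp (s*y+c))) + μ₂^2 * (2 * (Real.exp (s*y+c))^1 * (s * Real.exp (s*y+c)))) y :=
    ((he.const_mul (4*μ₀*μ₂)).const_sub (μ₀^2)).add ((he.pow 2).const_mul (μ₂^2))
  have hnum := (he.mul hpoly).const_mul (a₂*μ₀*s^2)
  have h := hnum.div (hden.pow 4) (pow_ne_zero 4 hD)
  convert h using 1
  all_goals try rfl
  all_goals try (funext z; simp only [Pi.div_apply, Pi.mul_apply, Pi.pow_apply, Pi.sub_apply]; ring)
  all_goals (have hD' : μ₀ + Real.exp (s*y+c) * μ₂ ≠ 0 := by rwa [mul_comm] at hD)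
  all_goals ((try simp only [Pi.mul_apply, Pi.pow_apply, Nat.cast_ofNat]); field_simp; ring)
lemma spaceDerivs (a₂ μ₀ μ₂ C s c x : ℝ) (hD : μ₀ + μ₂ * Real.exp (s*x+c) ≠ 0) :
    deriv (fun z => C + a₂ * Real.exp (s*z+c) / (μ₀ + μ₂ * Real.exp (s*z+c))
      - a₂ * μ₂ * (Real.exp (s*z+c))^2 / (μ₀ + μ₂ * Real.exp (s*z+c))^2) x
      = a₂ * μ₀ * s * (Real.exp (s*x+c) * (μ₀ - μ₂ * Real.exp (s*x+c)))
        / (μ₀ + μ₂ * Real.exp (s*x+c))^3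
    ∧ iteratedDeriv 3 (fun z => C + a₂ * Real.exp (s*z+c) / (μ₀ + μ₂ * Real.exp (s*z+c))
      - a₂ * μ₂ * (Real.exp (s*z+c))^2 / (μ₀ + μ₂ * Real.exp (s*z+c))^2) x
      = a₂ * μ₀ * s^3 * (Real.exp (s*x+c) * (μ₀ - μ₂ * Real.exp (s*x+c))
          * (μ₀^2 - 10*μ₀*μ₂*Real.exp (s*x+c) + μ₂^2*(Real.exp (s*x+c))^2))
        / (μ₀ + μ₂ * Real.exp (s*x+c))^5 := by
  have hS : IsOpen {y : ℝ | μ₀ + μ₂ * Real.exp (s*y+c) ≠ 0} := by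
    have hc : Continuous fun y : ℝ => μ₀ + μ₂ * Real.exp (s*y+c) := by fun_prop
    exact isOpen_compl_singleton.preimage hc
  have hmem : ∀ᶠ y in nhds x, μ₀ + μ₂ * Real.exp (s*y+c) ≠ 0 := hS.mem_nhds hD
  have e1 : deriv (fun z => C + a₂ * Real.exp (s*z+c) / (μ₀ + μ₂ * Real.exp (s*z+c))
      - a₂ * μ₂ * (Real.exp (s*z+c))^2 / (μ₀ + μ₂ * Real.exp (s*z+c))^2)
      =ᶠ[nhds x] (fun y => a₂ * μ₀ * s * (Real.exp (s*y+c) * (μ₀ - μ₂ * Real.exp (s*y+c)))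
        / (μ₀ + μ₂ * Real.exp (s*y+c))^3) := by
    filter_upwards [hmem] with y hy
    exact (aux1 a₂ μ₀ μ₂ C s c y hy).deriv
  have e2 : deriv (fun y => a₂ * μ₀ * s * (Real.exp (s*y+c) * (μ₀ - μ₂ * Real.exp (s*y+c)))
        / (μ₀ + μ₂ * Real.exp (s*y+c))^3)
      =ᶠ[nhds x] (fun y => a₂ * μ₀ * s^2 * (Real.exp (s*y+c) * (μ₀^2 - 4*μ₀*μ₂*Real.exp (s*y+c) + μ₂^2*(Real.exp (s*y+c))^2))
        / (μ₀ + μ₂ * Real.exp (s*y+c))^4) := by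
    filter_upwards [hmem] with y hy
    exact (aux2 a₂ μ₀ μ₂ s c y hy).deriv
  constructor
  · exact (aux1 a₂ μ₀ μ₂ C s c x hD).deriv
  · rw [show (3:ℕ) = 2 + 1 from rfl, iteratedDeriv_succ, iteratedDeriv_succ, iteratedDeriv_one]
    rw [(e1.deriv.trans e2).deriv_eq]
    exact (aux3 a₂ μ₀ μ₂ s c x hD).deriv

lemma keyalg (ζ ρ a₂ μ₀ μ₂ c₂ s e : ℝ) (hζ : ζ ≠ 0) (hμ₂ : μ₂ ≠ 0)
    (hD : μ₀ + μ₂ * e ≠ 0)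
    (hkey : s = 0 ∨ (s ≠ 0 ∧ 12 * ρ * μ₂ * s^2 = ζ * a₂)) :
    a₂ * μ₀ * (-(s*c₂)) * (e * (μ₀ - μ₂ * e)) / (μ₀ + μ₂ * e)^3
    + ζ * ((12 * c₂ * μ₂ - ζ * a₂) / (12 * ζ * μ₂) + a₂ * e / (μ₀ + μ₂ * e)
        - a₂ * μ₂ * e^2 / (μ₀ + μ₂ * e)^2)
      * (a₂ * μ₀ * s * (e * (μ₀ - μ₂ * e)) / (μ₀ + μ₂ * e)^3)
    + ρ * (a₂ * μ₀ * s^3 * (e * (μ₀ - μ₂ * e) * (μ₀^2 - 10*μ₀*μ₂*e + μ₂^2*e^2))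
        / (μ₀ + μ₂ * e)^5) = 0 := by
  rcases hkey with hs | ⟨hs, hk⟩
  · subst hs; ring
  · have hρ : ρ = ζ * a₂ / (12 * μ₂ * s^2) := by
      field_simp
      linarith [hk]
    subst hρ
    have hD' : μ₀ + e * μ₂ ≠ 0 := by rwa [mul_comm] at hD
    field_simp
    ring

lemma slope_key (ζ ρ a₂ μ₂ k₂ ε : ℝ) (hk₂ : k₂ ≠ 0)
    (hpos : 0 < ζ * a₂ / (ρ * μ₂)) (hε : ε = 1 ∨ ε = -1) :
    ε * (Real.sqrt (ζ * a₂) / (2 * k₂ * Real.sqrt (3 * ρ * μ₂))) * k₂ = 0 ∨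
    (ε * (Real.sqrt (ζ * a₂) / (2 * k₂ * Real.sqrt (3 * ρ * μ₂))) * k₂ ≠ 0 ∧
      12 * ρ * μ₂ * (ε * (Real.sqrt (ζ * a₂) / (2 * k₂ * Real.sqrt (3 * ρ * μ₂))) * k₂)^2 = ζ * a₂) := by
  have hε2 : ε ^ 2 = 1 := by rcases hε with h | h <;> subst h <;> norm_num
  have hεne : ε ≠ 0 := by rcases hε with h | h <;> subst h <;> norm_num
  rcases lt_trichotomy (ρ * μ₂) 0 with hρμ | hρμ | hρμ
  · left
    have hζa : ζ * a₂ ≤ 0 := by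
      by_contra h
      push_neg at h
      have := div_neg_of_pos_of_neg h hρμ
      linarith
    rw [Real.sqrt_eq_zero_of_nonpos hζa]
    ring
  · exfalso; rw [hρμ, div_zero] at hpos; linarith
  · right
    have hζa : 0 < ζ * a₂ := by
      by_contra h
      push_neg at h
      have := div_nonpos_of_nonpos_of_nonneg h hρμ.le
      linarith
    have hB : 0 < 3 * ρ * μ₂ := by nlinarith
    have hsA : Real.sqrt (ζ * a₂) ≠ 0 := ne_of_gt (Real.sqrt_pos.mpr hζa)
    have hsB : Real.sqrt (3 * ρ * μ₂) ≠ 0 := ne_of_gt (Real.sqrt_pos.mpr hB)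
    constructor
    · apply mul_ne_zero _ hk₂
      exact mul_ne_zero hεne (div_ne_zero hsA (by positivity))
    · have h1 : Real.sqrt (ζ * a₂) ^ 2 = ζ * a₂ := Real.sq_sqrt hζa.le
      have h2 : Real.sqrt (3 * ρ * μ₂) ^ 2 = 3 * ρ * μ₂ := Real.sq_sqrt hB.le
      have expand : (ε * (Real.sqrt (ζ * a₂) / (2 * k₂ * Real.sqrt (3 * ρ * μ₂))) * k₂)^2
          = ε^2 * (Real.sqrt (ζ * a₂))^2 * k₂^2 / (2^2 * k₂^2 * (Real.sqrt (3 * ρ * μ₂))^2) := by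
        ring
      rw [expand, hε2, h1, h2]
      field_simp [left_ne_zero_of_mul hρμ.ne', right_ne_zero_of_mul hρμ.ne']
      ring

theorem exponential_solution_solves_kdv
    (ζ ρ a₂ μ₀ μ₂ k₂ c₂ θ₁ ε : ℝ)
    (hζ : ζ ≠ 0) (hμ₂ : μ₂ ≠ 0) (hk₂ : k₂ ≠ 0) (hρ : ρ ≠ 0)
    (hpos : 0 < ζ * a₂ / (ρ * μ₂))
    (hε : ε = 1 ∨ ε = -1)
    (E u : ℝ → ℝ → ℝ)
    (hE : ∀ x t, E x t = Real.exp (ε * (Real.sqrt (ζ * a₂) / (2 * k₂ * Real.sqrt (3 * ρ * μ₂)))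
        * (k₂ * (x - c₂ * t) + θ₁)))
    (hu : ∀ x t, u x t = (12 * c₂ * μ₂ - ζ * a₂) / (12 * ζ * μ₂)
        + a₂ * E x t / (μ₀ + μ₂ * E x t)
        - a₂ * μ₂ * (E x t) ^ 2 / (μ₀ + μ₂ * E x t) ^ 2) :
    ∀ x t, μ₀ + μ₂ * E x t ≠ 0 →
      deriv (fun τ => u x τ) t
        + ζ * u x t * deriv (fun y => u y t) x
        + ρ * iteratedDeriv 3 (fun y => u y t) x = 0 := by
  intro x t hD
  set b := ε * (Real.sqrt (ζ * a₂) / (2 * k₂ * Real.sqrt (3 * ρ * μ₂))) with hb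
  set s := b * k₂ with hs
  set C := (12 * c₂ * μ₂ - ζ * a₂) / (12 * ζ * μ₂) with hC
  set cx := b * θ₁ - s * c₂ * t with hcx
  set ct := s * x + b * θ₁ with hct
  have key := slope_key ζ ρ a₂ μ₂ k₂ ε hk₂ hpos hε
  rw [← hb, ← hs] at key
  -- E rewritten in the two traveling-wave forms
  have hEx : ∀ y, E y t = Real.exp (s * y + cx) := by
    intro y
    rw [hE]
    congr 1
    rw [hcx, hs, hb]
    ring
  have hEt : ∀ τ, E x τ = Real.exp (-(s * c₂) * τ + ct) := by
    intro τ
    rw [hE]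
    congr 1
    rw [hct, hs, hb]
    ring
  have hDx : μ₀ + μ₂ * Real.exp (s * x + cx) ≠ 0 := by rw [← hEx x]; exact hD
  have hDt : μ₀ + μ₂ * Real.exp (-(s * c₂) * t + ct) ≠ 0 := by rw [← hEt t]; exact hD
  have hfun_x : (fun y => u y t) = (fun z => C + a₂ * Real.exp (s*z+cx) / (μ₀ + μ₂ * Real.exp (s*z+cx))
      - a₂ * μ₂ * (Real.exp (s*z+cx))^2 / (μ₀ + μ₂ * Real.exp (s*z+cx))^2) := by
    funext y
    rw [hu, hEx y, hC]
  have hfun_t : (fun τ => u x τ) = (fun τ => C + a₂ * Real.exp (-(s*c₂)*τ+ct) / (μ₀ + μ₂ * Real.exp (-(s*c₂)*τ+ct))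
      - a₂ * μ₂ * (Real.exp (-(s*c₂)*τ+ct))^2 / (μ₀ + μ₂ * Real.exp (-(s*c₂)*τ+ct))^2) := by
    funext τ
    rw [hu, hEt τ, hC]
  obtain ⟨d1, d3⟩ := spaceDerivs a₂ μ₀ μ₂ C s cx x hDx
  have dt := (aux1 a₂ μ₀ μ₂ C (-(s*c₂)) ct t hDt).deriv
  have hexp : Real.exp (-(s * c₂) * t + ct) = Real.exp (s * x + cx) := by
    congr 1
    rw [hct, hcx]
    ring
  rw [hfun_x, hfun_t, hu x t, hEx x, d1, d3, dt, hexp]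
  exact keyalg ζ ρ a₂ μ₀ μ₂ c₂ s (Real.exp (s * x + cx)) hζ hμ₂ hDx key
end
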